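/- (Theorem 1, monotonicity of MTWDL.) Let τ0 > 0 and for (d,v) ∈ ℝ² write Z = d + τ0·v. Let D ⊂ ℝ² be a bounded Lebesgue-measurable set of positive Lebesgue measure, and let u : ℝ² → ℝ be Lebesgue integrable on D with u(d,v) > 0 for all (d,v) ∈ D. Suppose λ̃ : (0,∞) → ℝ is differentiable and satisfies ∂U/∂λ(λ̃(σ),σ) = 0 for every σ > 0 (i.e. λ̃(σ) is the optimal decision threshold). Then the minimal total wrong decision loss Ũ(σ) = U(λ̃(σ),σ) is a strictly monotonically increasing function of σ; in fact Ũ'(σ) > 0 for all σ > 0. -/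

import Mathlib

open MeasureTheory Real Filter

/-- The Gaussian Q-function `Q(x) = (1/√(2π)) ∫_x^∞ exp(−t²/2) dt`. -/
noncomputable def Qfun (x : ℝ) : ℝ :=
  (Real.sqrt (2 * Real.pi))⁻¹ * ∫ t in Set.Ioi x, Real.exp (-t ^ 2 / 2)

/-- The wrong-decision probability `P_w(d,v;λ,σ)`. -/
noncomputable def Pw (τ0 σ lam : ℝ) (p : ℝ × ℝ) : ℝ :=
  if 0 ≤ p.1 + τ0 * p.2 then Qfun ((p.1 + τ0 * p.2 - lam) / σ)
  else Qfun (-(p.1 + τ0 * p.2 - lam) / σ)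

/-- The total wrong decision loss `U(λ,σ) = ∬_D u(d,v) P_w(d,v;λ,σ) dd dv`. -/
noncomputable def Uloss (τ0 : ℝ) (D : Set (ℝ × ℝ)) (u : ℝ × ℝ → ℝ) (lam σ : ℝ) : ℝ :=
  ∫ p in D, u p * Pw τ0 σ lam p

/-!
At an optimal threshold `λ̃(σ)` the partial derivative `∂U/∂λ` vanishes, so by the envelope
theorem `Ũ'(σ) = ∂U/∂σ (λ̃(σ), σ)`. Writing `P_w = Q(s (Z - λ) / σ)` with `s = ±1` the side
of `Z`, both partials are integrals against `u · φ(s (Z - λ) / σ)`, and the combination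
`∂U/∂σ + (λ / σ) ∂U/∂λ` collapses to `∫_D u φ(s (Z - λ) / σ) |Z| / σ²`, which is positive
because the line `Z = 0` is Lebesgue-null. Since `|x| φ(x)` is bounded, the `(λ, σ)`-derivative
of the integrand is dominated by a constant times `|u| / σ`, which justifies differentiating
under the integral sign.
-/
noncomputable def gaussDensity (x : ℝ) : ℝ := (√(2 * π))⁻¹ * exp (-x ^ 2 / 2)

lemma gaussDensity_pos (x : ℝ) : 0 < gaussDensity x := by
  unfold gaussDensity; positivity

lemma gaussDensity_le (x : ℝ) : gaussDensity x ≤ (√(2 * π))⁻¹ :=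
  mul_le_of_le_one_right (by positivity) (exp_le_one_iff.2 (by nlinarith [sq_nonneg x]))

lemma abs_mul_gaussDensity_le (x : ℝ) : |x| * gaussDensity x ≤ (√(2 * π))⁻¹ := by
  have hx : |x| ≤ exp (x ^ 2 / 2) := by
    nlinarith [add_one_le_exp (x ^ 2 / 2), sq_abs x, sq_nonneg (|x| - 1)]
  have h : |x| * exp (-x ^ 2 / 2) ≤ 1 := by
    rw [neg_div, exp_neg, ← div_eq_mul_inv]
    exact div_le_one_of_le₀ hx (exp_pos _).le
  calc |x| * gaussDensity x = (√(2 * π))⁻¹ * (|x| * exp (-x ^ 2 / 2)) := by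
        unfold gaussDensity; ring
    _ ≤ (√(2 * π))⁻¹ := mul_le_of_le_one_right (by positivity) h

@[fun_prop]
lemma continuous_gaussDensity : Continuous gaussDensity := by
  unfold gaussDensity; fun_prop

lemma integrable_exp_neg_sq_div_two : Integrable fun t : ℝ => exp (-t ^ 2 / 2) := by
  simpa [neg_div, div_eq_inv_mul] using integrable_exp_neg_mul_sq (b := (2 : ℝ)⁻¹) (by norm_num)

lemma hasDerivAt_Qfun (x : ℝ) : HasDerivAt Qfun (-gaussDensity x) x := by
  have hg := integrable_exp_neg_sq_div_two
  have hQ : Qfun = fun y => (√(2 * π))⁻¹ *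
      ((∫ t in Set.Ioi 0, exp (-t ^ 2 / 2)) - ∫ t in (0 : ℝ)..y, exp (-t ^ 2 / 2)) := by
    ext y
    rw [Qfun, ← intervalIntegral.integral_Ioi_sub_Ioi' hg.integrableOn hg.integrableOn,
      sub_sub_cancel]
  have hFTC : HasDerivAt (fun y => ∫ t in (0 : ℝ)..y, exp (-t ^ 2 / 2)) (exp (-x ^ 2 / 2)) x :=
    intervalIntegral.integral_hasDerivAt_right hg.intervalIntegrable
      ((by fun_prop : Continuous fun t : ℝ => exp (-t ^ 2 / 2)).stronglyMeasurableAtFilter _ _)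
      (by fun_prop)
  rw [hQ]
  exact ((hFTC.const_sub _).const_mul _).congr_deriv (by rw [gaussDensity, mul_neg])

lemma continuous_Qfun : Continuous Qfun :=
  continuous_iff_continuousAt.2 fun x => (hasDerivAt_Qfun x).continuousAt

lemma abs_Qfun_le_one (x : ℝ) : |Qfun x| ≤ 1 := by
  have htotal : ∫ t, exp (-t ^ 2 / 2) = √(2 * π) := by
    simpa [neg_div, div_eq_inv_mul, div_inv_eq_mul, mul_comm] using integral_gaussian (2 : ℝ)⁻¹
  have hle : ∫ t in Set.Ioi x, exp (-t ^ 2 / 2) ≤ √(2 * π) :=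
    htotal ▸ setIntegral_le_integral integrable_exp_neg_sq_div_two
      (ae_of_all _ fun t => (exp_pos _).le)
  rw [Qfun, abs_of_nonneg (by positivity)]
  exact inv_mul_le_one_of_le₀ hle (by positivity)

noncomputable def qfunScaledFDeriv (s z : ℝ) (q : ℝ × ℝ) : ℝ × ℝ →L[ℝ] ℝ :=
  (gaussDensity (s * (z - q.1) / q.2) / q.2) •
    (s • ContinuousLinearMap.fst ℝ ℝ ℝ + (s * (z - q.1) / q.2) • ContinuousLinearMap.snd ℝ ℝ ℝ)

lemma qfunScaledFDeriv_apply (s z : ℝ) (q v : ℝ × ℝ) :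
    qfunScaledFDeriv s z q v =
      gaussDensity (s * (z - q.1) / q.2) / q.2 * (s * v.1 + s * (z - q.1) / q.2 * v.2) := by
  simp [qfunScaledFDeriv, mul_add]

lemma hasFDerivAt_Qfun_scaled (s z : ℝ) {q : ℝ × ℝ} (hq : q.2 ≠ 0) :
    HasFDerivAt (fun q : ℝ × ℝ => Qfun (s * (z - q.1) / q.2)) (qfunScaledFDeriv s z q) q := by
  have harg := ((hasFDerivAt_fst.const_sub z).const_mul s).mul
    ((hasDerivAt_inv hq).comp_hasFDerivAt q (hasFDerivAt_snd (𝕜 := ℝ) (p := q)))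
  refine ((hasDerivAt_Qfun _).comp_hasFDerivAt q harg).congr_fderiv
    (ContinuousLinearMap.ext fun v => ?_)
  simp only [qfunScaledFDeriv_apply, Function.comp_apply, Pi.mul_apply, add_apply, smul_apply,
    smul_add, smul_neg, neg_smul, neg_neg, smul_eq_mul, ContinuousLinearMap.coe_fst',
    ContinuousLinearMap.coe_snd']
  field_simp
  ring

lemma norm_qfunScaledFDeriv_le {s : ℝ} (hs : |s| ≤ 1) (z : ℝ) {q : ℝ × ℝ} (hq : 0 < q.2) :
    ‖qfunScaledFDeriv s z q‖ ≤ 2 * (√(2 * π))⁻¹ / q.2 := by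
  set x := s * (z - q.1) / q.2
  have hx : gaussDensity x * |x| ≤ (√(2 * π))⁻¹ := by
    rw [mul_comm]; exact abs_mul_gaussDensity_le x
  have hs' : gaussDensity x * |s| ≤ (√(2 * π))⁻¹ :=
    (mul_le_of_le_one_right (gaussDensity_pos x).le hs).trans (gaussDensity_le x)
  calc ‖qfunScaledFDeriv s z q‖
      ≤ gaussDensity x / q.2 * (|s| * 1 + |x| * 1) := by
        have hc : 0 ≤ gaussDensity x / q.2 := div_nonneg (gaussDensity_pos x).le hq.le
        rw [qfunScaledFDeriv, norm_smul, Real.norm_of_nonneg hc]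
        refine mul_le_mul_of_nonneg_left ((norm_add_le _ _).trans ?_) hc
        rw [norm_smul, norm_smul, Real.norm_eq_abs, Real.norm_eq_abs]
        gcongr
        exacts [ContinuousLinearMap.norm_fst_le ℝ ℝ ℝ, ContinuousLinearMap.norm_snd_le ℝ ℝ ℝ]
    _ = (gaussDensity x * |s| + gaussDensity x * |x|) / q.2 := by ring
    _ ≤ ((√(2 * π))⁻¹ + (√(2 * π))⁻¹) / q.2 := by gcongr
    _ = 2 * (√(2 * π))⁻¹ / q.2 := by ring

lemma qfunScaledFDeriv_apply_div_one (s z : ℝ) {q : ℝ × ℝ} (hq : q.2 ≠ 0) :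
    qfunScaledFDeriv s z q (q.1 / q.2, 1) =
      gaussDensity (s * (z - q.1) / q.2) * (s * z) / q.2 ^ 2 := by
  rw [qfunScaledFDeriv_apply]
  field_simp
  ring

theorem HasFDerivAt.hasDerivAt_envelope {F : ℝ × ℝ → ℝ} {L : ℝ × ℝ →L[ℝ] ℝ} {g : ℝ → ℝ}
    {σ : ℝ} (hF : HasFDerivAt F L (g σ, σ)) (hg : DifferentiableAt ℝ g σ)
    (hopt : deriv (fun l => F (l, σ)) (g σ) = 0) (a : ℝ) :
    HasDerivAt (fun s => F (g s, s)) (L (a, 1)) σ := by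
  have hpartial : L (1, 0) = 0 := by
    have h := hF.comp_hasDerivAt (g σ) ((hasDerivAt_id' (g σ)).prodMk (hasDerivAt_const (g σ) σ))
    rw [← h.deriv]
    exact hopt
  have hdir : ((a, 1) : ℝ × ℝ) = (deriv g σ, 1) + (a - deriv g σ) • (1, 0) := by
    ext <;> simp
  rw [hdir, map_add, map_smul, hpartial, smul_zero, add_zero]
  have hcurve : HasDerivAt (fun s => (g s, s)) (deriv g σ, 1) σ :=
    hg.hasDerivAt.prodMk (hasDerivAt_id' σ)
  exact hF.comp_hasDerivAt_of_eq σ hcurve rfl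

section ParametricIntegral

variable {α : Type*} [MeasurableSpace α] {μ : Measure α} {w s z : α → ℝ}

lemma measurable_qfunScaledFDeriv (hs : Measurable s) (hz : Measurable z) (q : ℝ × ℝ) :
    Measurable fun a => qfunScaledFDeriv (s a) (z a) q := by
  unfold qfunScaledFDeriv
  fun_prop

theorem hasFDerivAt_integral_mul_Qfun_scaled (hw : Integrable w μ) (hs : Measurable s)
    (hs1 : ∀ a, |s a| ≤ 1) (hz : Measurable z) {q₀ : ℝ × ℝ} (hq₀ : 0 < q₀.2) :
    Integrable (fun a => w a • qfunScaledFDeriv (s a) (z a) q₀) μ ∧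
    HasFDerivAt (fun q : ℝ × ℝ => ∫ a, w a * Qfun (s a * (z a - q.1) / q.2) ∂μ)
      (∫ a, w a • qfunScaledFDeriv (s a) (z a) q₀ ∂μ) q₀ := by
  have hball : ∀ q ∈ Metric.ball q₀ (q₀.2 / 2), q₀.2 / 2 < q.2 := by
    intro q hq
    rw [Metric.mem_ball, Prod.dist_eq, max_lt_iff, Real.dist_eq] at hq
    linarith [(abs_lt.1 hq.2).1]
  have hbound : ∀ a, ∀ q ∈ Metric.ball q₀ (q₀.2 / 2),
      ‖w a • qfunScaledFDeriv (s a) (z a) q‖ ≤ ‖w a‖ * (4 * (√(2 * π))⁻¹ / q₀.2) := by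
    intro a q hq
    have hq2 := hball q hq
    rw [norm_smul]
    gcongr
    calc ‖qfunScaledFDeriv (s a) (z a) q‖ ≤ 2 * (√(2 * π))⁻¹ / q.2 :=
          norm_qfunScaledFDeriv_le (hs1 a) (z a) (by linarith)
      _ ≤ 2 * (√(2 * π))⁻¹ / (q₀.2 / 2) := by gcongr
      _ = 4 * (√(2 * π))⁻¹ / q₀.2 := by ring
  have hF'meas : AEStronglyMeasurable (fun a => w a • qfunScaledFDeriv (s a) (z a) q₀) μ :=
    hw.aestronglyMeasurable.smul (measurable_qfunScaledFDeriv hs hz q₀).aestronglyMeasurable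
  have hFmeas (q : ℝ × ℝ) :
      AEStronglyMeasurable (fun a => Qfun (s a * (z a - q.1) / q.2)) μ :=
    (continuous_Qfun.measurable.comp (by fun_prop)).aestronglyMeasurable
  refine ⟨(hw.norm.mul_const _).mono' hF'meas
    (ae_of_all _ fun a => hbound a q₀ (Metric.mem_ball_self (by positivity))), ?_⟩
  refine hasFDerivAt_integral_of_dominated_of_fderiv_le (Metric.ball_mem_nhds q₀ (by positivity))
    (Eventually.of_forall fun q => hw.aestronglyMeasurable.mul (hFmeas q))
    (hw.mul_bdd (hFmeas q₀) (ae_of_all _ fun a => abs_Qfun_le_one _)) hF'meas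
    (ae_of_all _ (hbound ·)) (hw.norm.mul_const _) (ae_of_all _ fun a q hq => ?_)
  exact (hasFDerivAt_Qfun_scaled (s a) (z a) (by linarith [hball q hq])).const_mul (w a)

theorem hasDerivAt_integral_mul_Qfun_scaled_of_optimal (hw : Integrable w μ)
    (hs : Measurable s) (hs1 : ∀ a, |s a| ≤ 1) (hz : Measurable z) {g : ℝ → ℝ} {σ : ℝ}
    (hσ : 0 < σ) (hg : DifferentiableAt ℝ g σ)
    (hopt : deriv (fun l => ∫ a, w a * Qfun (s a * (z a - l) / σ) ∂μ) (g σ) = 0) :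
    Integrable (fun a => w a * (gaussDensity (s a * (z a - g σ) / σ) * (s a * z a) / σ ^ 2)) μ ∧
    HasDerivAt (fun σ' => ∫ a, w a * Qfun (s a * (z a - g σ') / σ') ∂μ)
      (∫ a, w a * (gaussDensity (s a * (z a - g σ) / σ) * (s a * z a) / σ ^ 2) ∂μ) σ := by
  obtain ⟨hint, hF⟩ := hasFDerivAt_integral_mul_Qfun_scaled hw hs hs1 hz (q₀ := (g σ, σ)) hσ
  have happly (a : α) : (w a • qfunScaledFDeriv (s a) (z a) (g σ, σ)) (g σ / σ, 1) =
      w a * (gaussDensity (s a * (z a - g σ) / σ) * (s a * z a) / σ ^ 2) := by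
    rw [smul_apply, smul_eq_mul, qfunScaledFDeriv_apply_div_one _ _ hσ.ne']
  have hderiv := hF.hasDerivAt_envelope hg hopt (g σ / σ)
  rw [ContinuousLinearMap.integral_apply hint] at hderiv
  simp only [happly] at hderiv
  exact ⟨(hint.apply_continuousLinearMap _).congr (ae_of_all _ happly), hderiv⟩

end ParametricIntegral

-- Unlike `Real.sign`, this is `1` at `0`, matching the case split in `Pw`.
noncomputable def decisionSign (z : ℝ) : ℝ := if 0 ≤ z then 1 else -1

lemma measurable_decisionSign : Measurable decisionSign :=
  Measurable.ite measurableSet_Ici measurable_const measurable_const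

lemma abs_decisionSign (z : ℝ) : |decisionSign z| = 1 := by
  unfold decisionSign; split_ifs <;> simp

lemma decisionSign_mul_self (z : ℝ) : decisionSign z * z = |z| := by
  unfold decisionSign; split_ifs with h
  · rw [one_mul, abs_of_nonneg h]
  · rw [neg_one_mul, abs_of_neg (not_le.1 h)]

lemma Pw_eq_Qfun (τ0 σ lam : ℝ) (p : ℝ × ℝ) :
    Pw τ0 σ lam p =
      Qfun (decisionSign (p.1 + τ0 * p.2) * (p.1 + τ0 * p.2 - lam) / σ) := by
  unfold Pw decisionSign
  split_ifs <;> simp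

lemma volume_setOf_fst_add_mul_snd_eq_zero (τ0 : ℝ) :
    volume {p : ℝ × ℝ | p.1 + τ0 * p.2 = 0} = 0 := by
  let L : (ℝ × ℝ) →ₗ[ℝ] ℝ := LinearMap.fst ℝ ℝ ℝ + τ0 • LinearMap.snd ℝ ℝ ℝ
  have hL : {p : ℝ × ℝ | p.1 + τ0 * p.2 = 0} = LinearMap.ker L := by
    ext p; simp [L]
  rw [hL]
  refine Measure.addHaar_submodule _ _ fun h => ?_
  have h1 : ((1 : ℝ), (0 : ℝ)) ∈ LinearMap.ker L := h ▸ Submodule.mem_top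
  simp [L] at h1

theorem exists_pos_hasDerivAt_Uloss_optimal {τ0 : ℝ} {D : Set (ℝ × ℝ)} (hDmeas : MeasurableSet D)
    (hDpos : 0 < volume D) {u : ℝ × ℝ → ℝ} (hu_int : IntegrableOn u D volume)
    (hu_pos : ∀ p ∈ D, 0 < u p) {lamt : ℝ → ℝ} {σ : ℝ} (hσ : 0 < σ)
    (hdiff : DifferentiableAt ℝ lamt σ)
    (hopt : deriv (fun l => Uloss τ0 D u l σ) (lamt σ) = 0) :
    ∃ d, 0 < d ∧ HasDerivAt (fun s => Uloss τ0 D u (lamt s) s) d σ := by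
  set Z : ℝ × ℝ → ℝ := fun p => p.1 + τ0 * p.2
  have hU : Uloss τ0 D u =
      fun l σ' => ∫ p in D, u p * Qfun (decisionSign (Z p) * (Z p - l) / σ') := by
    ext l σ'
    simp only [Uloss, Pw_eq_Qfun, Z]
  rw [hU] at hopt ⊢
  beta_reduce at hopt ⊢
  obtain ⟨hint, hderiv⟩ := hasDerivAt_integral_mul_Qfun_scaled_of_optimal hu_int
    (s := fun p => decisionSign (Z p)) (measurable_decisionSign.comp (by fun_prop))
    (fun p => (abs_decisionSign _).le) (by fun_prop) hσ hdiff hopt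
  refine ⟨_, ?_, hderiv⟩
  simp only [decisionSign_mul_self] at hint ⊢
  have hnonneg : 0 ≤ᵐ[volume.restrict D] fun p =>
      u p * (gaussDensity (decisionSign (Z p) * (Z p - lamt σ) / σ) * |Z p| / σ ^ 2) := by
    filter_upwards [ae_restrict_mem hDmeas] with p hp
    have := gaussDensity_pos (decisionSign (Z p) * (Z p - lamt σ) / σ)
    have := hu_pos p hp
    positivity
  refine (setIntegral_pos_iff_support_of_nonneg_ae hnonneg hint).2 ?_
  calc (0 : ENNReal) < volume D := hDpos
    _ = volume (D \ {p | Z p = 0}) :=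
      (measure_sdiff_null (volume_setOf_fst_add_mul_snd_eq_zero τ0)).symm
    _ ≤ volume (Function.support _ ∩ D) := by
      refine measure_mono fun p ⟨hpD, hpZ⟩ => ⟨?_, hpD⟩
      have := gaussDensity_pos (decisionSign (Z p) * (Z p - lamt σ) / σ)
      have := hu_pos p hpD
      have : 0 < |Z p| := abs_pos.2 hpZ
      exact (by positivity : (0 : ℝ) < _).ne'

theorem stmt5_general (τ0 : ℝ) (D : Set (ℝ × ℝ)) (hDmeas : MeasurableSet D)
    (hDpos : 0 < volume D) (u : ℝ × ℝ → ℝ)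
    (hu_int : IntegrableOn u D volume)
    (hu_pos : ∀ p ∈ D, 0 < u p)
    (lamt : ℝ → ℝ)
    (hlamt_diff : ∀ σ : ℝ, 0 < σ → DifferentiableAt ℝ lamt σ)
    (hlamt_opt : ∀ σ : ℝ, 0 < σ → deriv (fun l => Uloss τ0 D u l σ) (lamt σ) = 0) :
    StrictMonoOn (fun σ => Uloss τ0 D u (lamt σ) σ) (Set.Ioi (0 : ℝ)) ∧
    ∀ σ : ℝ, 0 < σ → 0 < deriv (fun s => Uloss τ0 D u (lamt s) s) σ := by
  have hderiv (σ : ℝ) (hσ : 0 < σ) :=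
    exists_pos_hasDerivAt_Uloss_optimal hDmeas hDpos hu_int hu_pos hσ (hlamt_diff σ hσ)
      (hlamt_opt σ hσ)
  have hderiv_pos (σ : ℝ) (hσ : 0 < σ) :
      0 < deriv (fun s => Uloss τ0 D u (lamt s) s) σ := by
    obtain ⟨d, hd, h⟩ := hderiv σ hσ
    rwa [h.deriv]
  refine ⟨strictMonoOn_of_deriv_pos (convex_Ioi 0) (fun σ hσ => ?_) (fun σ hσ => ?_), hderiv_pos⟩
  · obtain ⟨d, -, h⟩ := hderiv σ hσ
    exact h.continuousAt.continuousWithinAt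
  · rw [interior_Ioi] at hσ
    exact hderiv_pos σ hσ

theorem stmt5 (τ0 : ℝ) (hτ0 : 0 < τ0) (D : Set (ℝ × ℝ)) (hDmeas : MeasurableSet D)
    (hDbdd : Bornology.IsBounded D) (hDpos : 0 < volume D) (u : ℝ × ℝ → ℝ)
    (hu_int : IntegrableOn u D volume)
    (hu_pos : ∀ p ∈ D, 0 < u p)
    (lamt : ℝ → ℝ)
    (hlamt_diff : ∀ σ : ℝ, 0 < σ → DifferentiableAt ℝ lamt σ)
    (hlamt_opt : ∀ σ : ℝ, 0 < σ → deriv (fun l => Uloss τ0 D u l σ) (lamt σ) = 0) :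
    StrictMonoOn (fun σ => Uloss τ0 D u (lamt σ) σ) (Set.Ioi (0 : ℝ)) ∧
    ∀ σ : ℝ, 0 < σ → 0 < deriv (fun s => Uloss τ0 D u (lamt s) s) σ :=
  stmt5_general τ0 D hDmeas hDpos u hu_int hu_pos lamt hlamt_diff hlamt_opt
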